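/- For every fixed ζ ∈ [−1.5, −1.25], the function s ↦ L(ζ,s) = s − ζ − ln(1 + s − ζ) + 2(ζ + 1/2)²(s − ζ)² / ((2ζ + 1)ζ² + (2/3)ζ(s − ζ)) is strictly decreasing on the interval [−1, 0]; equivalently, ∂L(ζ,s)/∂s < 0 for all s ∈ [−1, 0] and ζ ∈ [−1.5, −1.25]. -/

import Mathlib

/-!
Writing `u = s - ζ`, we have `L(ζ, s) = g u` with `g u = u - log (1 + u) + A u² / (B + C u)`, whose
derivative is `u / (1 + u) + A u (2B + C u) / (B + C u)²`. For `u > 0` its sign is that of the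
polynomial `(B + C u)² + (1 + u) A (2B + C u)` in `ζ` and `u`, which `nlinarith` shows to be
negative from products of the nonnegative quantities `-ζ - 5/4` and `s + 1 = u + 1 + ζ`.
-/

open Real Set

/-- The auxiliary function `L(ζ, s)` from Lemma 2.4 of the paper. -/
noncomputable def Lfun (ζ s : ℝ) : ℝ :=
  s - ζ - Real.log (1 + s - ζ) +
    2 * (ζ + 1 / 2) ^ 2 * (s - ζ) ^ 2 /
      ((2 * ζ + 1) * ζ ^ 2 + (2 / 3) * ζ * (s - ζ))

theorem hasDerivAt_sub_log_one_add_add_div (A B C u : ℝ) (hu : 1 + u ≠ 0)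
    (hD : B + C * u ≠ 0) :
    HasDerivAt (fun u => u - log (1 + u) + A * u ^ 2 / (B + C * u))
      (u / (1 + u) + A * u * (2 * B + C * u) / (B + C * u) ^ 2) u := by
  have hlog : HasDerivAt (fun u => log (1 + u)) (1 / (1 + u)) u :=
    ((hasDerivAt_id u).const_add 1).log hu
  have hnum : HasDerivAt (fun u => A * u ^ 2) (A * (2 * u)) u := by
    simpa using (hasDerivAt_pow 2 u).const_mul A
  have hden : HasDerivAt (fun u => B + C * u) C u := by
    simpa using ((hasDerivAt_id u).const_mul C).const_add B
  refine (((hasDerivAt_id' u).sub hlog).add (hnum.div hden hD)).congr_deriv ?_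
  field_simp
  ring

theorem div_one_add_add_div_neg {A B C u : ℝ} (hu : 0 < u) (hD : B + C * u ≠ 0)
    (h : (B + C * u) ^ 2 + (1 + u) * A * (2 * B + C * u) < 0) :
    u / (1 + u) + A * u * (2 * B + C * u) / (B + C * u) ^ 2 < 0 := by
  have hu' : 0 < 1 + u := by linarith
  have hD2 : 0 < (B + C * u) ^ 2 := by positivity
  rw [div_add_div _ _ hu'.ne' hD2.ne']
  refine div_neg_of_neg_of_pos ?_ (by positivity)
  nlinarith [mul_neg_of_pos_of_neg hu h]

theorem Lfun_derivative_polynomial_neg {ζ u : ℝ} (hζ : ζ ≤ -5 / 4) (hu : -1 - ζ ≤ u) :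
    ((2 * ζ + 1) * ζ ^ 2 + 2 / 3 * ζ * u) ^ 2
      + (1 + u) * (2 * (ζ + 1 / 2) ^ 2) * (2 * ((2 * ζ + 1) * ζ ^ 2) + 2 / 3 * ζ * u) < 0 := by
  have hx : 0 ≤ -ζ - 5 / 4 := by linarith
  have ht : 0 ≤ u + 1 + ζ := by linarith
  nlinarith [mul_nonneg (mul_nonneg hx ht) ht, mul_nonneg (mul_nonneg hx hx) ht,
    mul_nonneg (mul_nonneg hx hx) hx]

theorem exists_hasDerivAt_Lfun_neg {ζ s : ℝ} (hζ : ζ ≤ -5 / 4) (hs : -1 ≤ s) :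
    ∃ d < 0, HasDerivAt (fun s => Lfun ζ s) d s := by
  have hu : 0 < s - ζ := by linarith
  have hD : (2 * ζ + 1) * ζ ^ 2 + 2 / 3 * ζ * (s - ζ) < 0 := by
    have hζ2 : 0 < ζ ^ 2 := by nlinarith
    nlinarith [mul_pos hζ2 (by linarith : 0 < -(2 * ζ + 1)), mul_pos hu (by linarith : 0 < -ζ)]
  refine ⟨_, div_one_add_add_div_neg hu hD.ne (Lfun_derivative_polynomial_neg hζ (by linarith)),
    ?_⟩
  have hL : (fun s => Lfun ζ s) = fun s => (fun u => u - log (1 + u)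
      + 2 * (ζ + 1 / 2) ^ 2 * u ^ 2 / ((2 * ζ + 1) * ζ ^ 2 + 2 / 3 * ζ * u)) (s - ζ) := by
    funext s
    rw [Lfun, add_sub_assoc]
  rw [hL]
  exact (hasDerivAt_sub_log_one_add_add_div _ _ _ _ (by linarith) hD.ne).comp_sub_const s ζ

/-- For each fixed `ζ ∈ [-1.5, -1.25]`, the map `s ↦ L(ζ, s)` is strictly
decreasing on `[-1, 0]`; equivalently its derivative in `s` is negative there. -/
theorem Lfun_strictAnti_in_s
    (ζ : ℝ) (hζ : ζ ∈ Set.Icc (-1.5 : ℝ) (-1.25)) :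
    StrictAntiOn (fun s => Lfun ζ s) (Set.Icc (-1 : ℝ) 0) ∧
    ∀ s ∈ Set.Icc (-1 : ℝ) 0, deriv (fun s => Lfun ζ s) s < 0 := by
  have hderiv : ∀ s ∈ Icc (-1 : ℝ) 0, ∃ d < 0, HasDerivAt (fun s => Lfun ζ s) d s :=
    fun s hs => exists_hasDerivAt_Lfun_neg (by linarith [hζ.2]) hs.1
  have hneg : ∀ s ∈ Icc (-1 : ℝ) 0, deriv (fun s => Lfun ζ s) s < 0 := by
    intro s hs
    obtain ⟨d, hd, h⟩ := hderiv s hs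
    rwa [h.deriv]
  refine ⟨strictAntiOn_of_deriv_neg (convex_Icc _ _) ?_ ?_, hneg⟩
  · intro s hs
    obtain ⟨d, -, h⟩ := hderiv s hs
    exact h.continuousAt.continuousWithinAt
  · exact fun s hs => hneg s (interior_subset hs)
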